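/- Let n ≥ 2, for an integer h ≥ 1 let K_h = conv(([-1,1]^{n-1} × {0}) ∪ {h e_n, -h e_n}) ⊆ ℝ^n, and let t = (1/2, …, 1/2, 0)ᵀ ∈ ℝ^n. Then lim_{h → ∞} #(K_h + t) / #(K_h) = 2^{n-2}. -/

import Mathlib

open scoped BigOperators

/-- The lattice point enumerator: the number of integer points in `A ⊆ ℝ^n`. -/
noncomputable def latCount {n : ℕ} (A : Set (Fin n → ℝ)) : ℕ :=
  (A ∩ {x : Fin n → ℝ | ∀ i, ∃ z : ℤ, x i = (z : ℝ)}).ncard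

/-- The cube `[-1,1]^{n-1} × {0}` in the hyperplane `eₙ^⊥ ⊆ ℝ^n`. -/
def cubeSlice (n : ℕ) : Set (Fin n → ℝ) :=
  {x | (∀ i : Fin n, (i : ℕ) < n - 1 → |x i| ≤ 1) ∧ ∀ i : Fin n, (i : ℕ) = n - 1 → x i = 0}

/-- The apex `h·eₙ`. -/
def apexVec (n h : ℕ) : Fin n → ℝ := fun i => if (i : ℕ) = n - 1 then (h : ℝ) else 0

/-- The double pyramid `K_h = conv(([-1,1]^{n-1} × {0}) ∪ {± h eₙ})`. -/
noncomputable def Kh (n h : ℕ) : Set (Fin n → ℝ) :=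
  convexHull ℝ (cubeSlice n ∪ {apexVec n h, -apexVec n h})

/-- The translation vector `t = (1/2, …, 1/2, 0)`. -/
noncomputable def tvec (n : ℕ) : Fin n → ℝ := fun i => if (i : ℕ) = n - 1 then 0 else 1 / 2

/-! The double pyramid is the convex join of the cube slice with the segment `[-h eₙ, h eₙ]`,
so for `h ≥ 1` it is `K_h = {x | |xₙ| ≤ h, h |xᵢ| + |xₙ| ≤ h for i < n}`. Its lattice points are
the `3^(n-1)` points of the cube slice together with the `2h` nonzero points of the axis. A lattice
point `x` of `K_h + t` has half-integral `xᵢ - 1/2`, so `h/2 + |xₙ| ≤ h`; these are exactly the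
`2^(n-1) (2⌊h/2⌋ + 1)` points with `xᵢ ∈ {0, 1}` and `|xₙ| ≤ h/2`. Hence the ratio tends to
`2^(n-1) / 2`. -/

open Set Filter Topology

lemma cubeSlice_eq_pi (n : ℕ) :
    cubeSlice n = univ.pi fun i : Fin n => if (i : ℕ) = n - 1 then {0} else Icc (-1) 1 := by
  ext x
  simp only [cubeSlice, mem_ofPred_eq, mem_univ_pi]
  constructor
  · rintro ⟨hlt, heq⟩ i
    split_ifs with hi
    · exact heq i hi
    · exact abs_le.mp (hlt i (by omega))
  · intro hx
    refine ⟨fun i hi => ?_, fun i hi => ?_⟩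
    · simpa [hi.ne, abs_le] using hx i
    · simpa [hi] using hx i

lemma convex_cubeSlice (n : ℕ) : Convex ℝ (cubeSlice n) :=
  cubeSlice_eq_pi n ▸ convex_pi fun i _ => by
    split_ifs
    exacts [convex_singleton 0, convex_Icc _ _]

lemma Kh_eq_convexJoin (n h : ℕ) :
    Kh n h = convexJoin ℝ (cubeSlice n) (segment ℝ (apexVec n h) (-apexVec n h)) := by
  have hcube : (cubeSlice n).Nonempty := ⟨0, by simp [cubeSlice]⟩
  rw [Kh, convexHull_union hcube (insert_nonempty _ _), (convex_cubeSlice n).convexHull_eq,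
    convexHull_pair]

section Succ

variable {m : ℕ}

lemma mem_cubeSlice_succ {x : Fin (m + 1) → ℝ} :
    x ∈ cubeSlice (m + 1) ↔ (∀ i : Fin m, |x i.castSucc| ≤ 1) ∧ x (Fin.last m) = 0 := by
  simp [cubeSlice_eq_pi, Fin.forall_fin_succ', abs_le, (Fin.is_lt _).ne]

lemma apexVec_succ (h : ℕ) : apexVec (m + 1) h = Pi.single (Fin.last m) (h : ℝ) := by
  ext i
  simp [apexVec, Pi.single_apply, Fin.ext_iff]

lemma segment_apexVec (h : ℕ) :
    segment ℝ (apexVec (m + 1) h) (-apexVec (m + 1) h) =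
      Pi.single (Fin.last m) '' Icc (-(h : ℝ)) h := by
  have hsingle := image_segment ℝ (LinearMap.single ℝ (fun _ => ℝ) (Fin.last m)).toAffineMap
    (h : ℝ) (-(h : ℝ))
  simp only [LinearMap.coe_toAffineMap, LinearMap.coe_single] at hsingle
  rw [apexVec_succ, ← Pi.single_neg, ← hsingle, segment_eq_uIcc,
    uIcc_of_ge (neg_le_self h.cast_nonneg)]

lemma bounds_of_mem_Kh {h : ℕ} {x : Fin (m + 1) → ℝ} (hx : x ∈ Kh (m + 1) h) :
    |x (Fin.last m)| ≤ h ∧ ∀ i : Fin m, h * |x i.castSucc| + |x (Fin.last m)| ≤ h := by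
  rw [Kh_eq_convexJoin, segment_apexVec, mem_convexJoin] at hx
  obtain ⟨q, hq, _, ⟨c, ⟨hc₁, hc₂⟩, rfl⟩, hx⟩ := hx
  rw [segment_eq_image] at hx
  obtain ⟨a, ⟨ha₀, ha₁⟩, rfl⟩ := hx
  rw [mem_cubeSlice_succ] at hq
  have hlast : |a * c| ≤ a * h := by
    rw [abs_mul, abs_of_nonneg ha₀]
    exact mul_le_mul_of_nonneg_left (abs_le.mpr ⟨hc₁, hc₂⟩) ha₀
  simp only [Pi.add_apply, Pi.smul_apply, smul_eq_mul, hq.2, Pi.single_eq_same,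
    Pi.single_eq_of_ne (Fin.castSucc_lt_last _).ne, mul_zero, zero_add, add_zero]
  refine ⟨by nlinarith, fun i => ?_⟩
  rw [abs_mul, abs_of_nonneg (sub_nonneg.mpr ha₁)]
  have hq' : (1 - a) * |q i.castSucc| ≤ 1 - a :=
    mul_le_of_le_one_right (sub_nonneg.mpr ha₁) (hq.1 i)
  nlinarith

lemma mem_Kh_of_bounds {h : ℕ} (hh : 0 < h) {x : Fin (m + 1) → ℝ} (hs : |x (Fin.last m)| ≤ h)
    (hx : ∀ i : Fin m, h * |x i.castSucc| + |x (Fin.last m)| ≤ h) : x ∈ Kh (m + 1) h := by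
  have hhR : (0 : ℝ) < h := Nat.cast_pos.mpr hh
  set s := x (Fin.last m)
  set a := |s| / h
  have ha₀ : 0 ≤ a := by positivity
  have ha₁ : a ≤ 1 := div_le_one_of_le₀ hs hhR.le
  have hxa : ∀ i : Fin m, |x i.castSucc| ≤ 1 - a := fun i => by
    rw [one_sub_div hhR.ne', le_div_iff₀ hhR]; linarith [hx i]
  -- `x = (1 - a) • q + a • (s / a) eₙ` with `q` in the cube slice. The divisions by `a` and
  -- `1 - a` are harmless where they vanish: `a = 0` forces `s = 0`, and `a = 1` forces `y = 0`.
  have hs₀ : a = 0 → s = 0 := fun h0 => by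
    simpa [a, hhR.ne'] using h0
  let y := x - Pi.single (Fin.last m) s
  have hy : 1 - a = 0 → y = 0 := fun h1 => by
    ext j
    refine Fin.lastCases (by simp [y, s]) (fun i => ?_) j
    simpa [y, h1, (Fin.castSucc_lt_last i).ne] using hxa i
  rw [Kh_eq_convexJoin, segment_apexVec, mem_convexJoin]
  refine ⟨fun j => y j / (1 - a), ?_, _, ⟨s / a, abs_le.mp ?_, rfl⟩, ?_⟩
  · rw [mem_cubeSlice_succ]
    refine ⟨fun i => ?_, by simp [y, s]⟩
    simp only [y, Pi.sub_apply, Pi.single_eq_of_ne (Fin.castSucc_lt_last i).ne, sub_zero,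
      abs_div]
    exact div_le_one_of_le₀ ((hxa i).trans (le_abs_self _)) (abs_nonneg _)
  · rw [abs_div, abs_of_nonneg ha₀]
    exact div_le_of_le_mul₀ ha₀ hhR.le (by rw [mul_div_cancel₀ _ hhR.ne'])
  · rw [segment_eq_image]
    refine ⟨a, ⟨ha₀, ha₁⟩, ?_⟩
    beta_reduce
    rw [← Pi.single_smul, smul_eq_mul, mul_div_cancel_of_imp' hs₀]
    ext j
    rw [Pi.add_apply, Pi.smul_apply, smul_eq_mul,
      mul_div_cancel_of_imp' fun h1 => congrFun (hy h1) j]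
    exact sub_add_cancel _ _

lemma mem_Kh_iff {h : ℕ} (hh : 0 < h) {x : Fin (m + 1) → ℝ} :
    x ∈ Kh (m + 1) h ↔
      |x (Fin.last m)| ≤ h ∧ ∀ i : Fin m, h * |x i.castSucc| + |x (Fin.last m)| ≤ h :=
  ⟨bounds_of_mem_Kh, fun ⟨hs, hx⟩ => mem_Kh_of_bounds hh hs hx⟩

lemma latCount_eq_ncard_intPoints {n : ℕ} (A : Set (Fin n → ℝ)) :
    latCount A = {z : Fin n → ℤ | (fun i => (z i : ℝ)) ∈ A}.ncard := by
  have hinj : Function.Injective fun (z : Fin n → ℤ) i => (z i : ℝ) :=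
    fun z w hzw => funext fun i => Int.cast_injective (congrFun hzw i)
  rw [latCount, ← ncard_image_of_injective _ hinj]
  congr 1
  ext x
  constructor
  · rintro ⟨hx, hint⟩
    choose z hz using hint
    exact ⟨z, by simpa [← funext hz] using hx, (funext hz).symm⟩
  · rintro ⟨z, hz, rfl⟩
    exact ⟨hz, fun i => ⟨z i, rfl⟩⟩

section SnocBox

variable {α : Type*}

def snocBox (s t : Finset α) : Finset (Fin (m + 1) → α) :=
  Fintype.piFinset (Fin.lastCases (motive := fun _ => Finset α) t fun _ => s)

lemma mem_snocBox {s t : Finset α} {z : Fin (m + 1) → α} :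
    z ∈ snocBox s t ↔ (∀ i : Fin m, z i.castSucc ∈ s) ∧ z (Fin.last m) ∈ t := by
  simp [snocBox, Fin.forall_fin_succ']

lemma card_snocBox (s t : Finset α) : (snocBox (m := m) s t).card = s.card ^ m * t.card := by
  simp [snocBox, Fintype.card_piFinset, Fin.prod_univ_castSucc]

end SnocBox

lemma intCast_mem_Kh_iff {h : ℕ} (hh : 0 < h) {z : Fin (m + 1) → ℤ} :
    (fun i => (z i : ℝ)) ∈ Kh (m + 1) h ↔
      |z (Fin.last m)| ≤ h ∧ ∀ i : Fin m, h * |z i.castSucc| + |z (Fin.last m)| ≤ h := by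
  rw [mem_Kh_iff hh]
  norm_cast

lemma mul_abs_add_abs_le_iff_of_ne_zero {h a w : ℤ} (hh : 0 < h) (hw : w ≠ 0) :
    h * |a| + |w| ≤ h ↔ a = 0 ∧ |w| ≤ h := by
  constructor
  · intro H
    have hw' : 0 < |w| := abs_pos.mpr hw
    have ha : |a| < 1 := by nlinarith [abs_nonneg a]
    exact ⟨Int.abs_lt_one_iff.mp ha, by nlinarith [abs_nonneg a]⟩
  · rintro ⟨rfl, hw'⟩
    simpa using hw'

lemma intPoints_Kh {h : ℕ} (hh : 0 < h) :
    {z : Fin (m + 1) → ℤ | (fun i => (z i : ℝ)) ∈ Kh (m + 1) h} =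
      ↑(snocBox (Finset.Icc (-1) 1) {0} ∪ snocBox {0} ((Finset.Icc (-(h : ℤ)) h).erase 0) :
        Finset (Fin (m + 1) → ℤ)) := by
  have hhZ : (0 : ℤ) < h := by exact_mod_cast hh
  ext z
  simp only [mem_ofPred_eq, intCast_mem_Kh_iff hh, Finset.coe_union, mem_union, Finset.mem_coe,
    mem_snocBox, Finset.mem_Icc, Finset.mem_singleton, Finset.mem_erase, ← abs_le]
  rcases eq_or_ne (z (Fin.last m)) 0 with hw | hw
  · simp [hw, mul_le_iff_le_one_right hhZ, hhZ.le]
  · simp only [hw, mul_abs_add_abs_le_iff_of_ne_zero hhZ hw, forall_and]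
    tauto

lemma latCount_Kh {h : ℕ} (hh : 0 < h) : latCount (Kh (m + 1) h) = 3 ^ m + 2 * h := by
  have hdisj : Disjoint (snocBox (m := m) (Finset.Icc (-1) 1) {0})
      (snocBox {0} ((Finset.Icc (-(h : ℤ)) h).erase 0)) :=
    Finset.disjoint_left.mpr fun z h₁ h₂ => by
      rw [mem_snocBox] at h₁ h₂
      exact (Finset.mem_erase.mp h₂.2).1 (Finset.mem_singleton.mp h₁.2)
  rw [latCount_eq_ncard_intPoints, intPoints_Kh hh, ncard_coe_finset,
    Finset.card_union_of_disjoint hdisj, card_snocBox, card_snocBox,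
    Finset.card_erase_of_mem (by simp), Int.card_Icc, Int.card_Icc]
  simp only [Finset.card_singleton, mul_one, one_pow, one_mul,
    show ((1 : ℤ) + 1 - -1).toNat = 3 from rfl]
  omega

lemma tvec_castSucc (i : Fin m) : tvec (m + 1) i.castSucc = 1 / 2 := by
  simp [tvec, (Fin.is_lt i).ne]

lemma tvec_last : tvec (m + 1) (Fin.last m) = 0 := by
  simp [tvec]

lemma intCast_mem_translate_Kh_iff {h : ℕ} (hh : 0 < h) {z : Fin (m + 1) → ℤ} :
    (fun i => (z i : ℝ)) ∈ (fun x => x + tvec (m + 1)) '' Kh (m + 1) h ↔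
      |z (Fin.last m)| ≤ h ∧
        ∀ i : Fin m, h * |(z i.castSucc : ℝ) - 1 / 2| + |(z (Fin.last m) : ℝ)| ≤ h := by
  rw [image_add_right, mem_preimage, mem_Kh_iff hh]
  simp only [Pi.add_apply, Pi.neg_apply, tvec_castSucc, tvec_last, neg_zero, add_zero,
    ← sub_eq_add_neg]
  norm_cast

lemma mul_abs_sub_half_add_abs_le_iff {h : ℝ} (hh : 0 < h) (a : ℤ) (w : ℝ) :
    h * |(a : ℝ) - 1 / 2| + |w| ≤ h ↔ (a = 0 ∨ a = 1) ∧ 2 * |w| ≤ h := by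
  by_cases ha : a = 0 ∨ a = 1
  · have : |(a : ℝ) - 1 / 2| = 1 / 2 := by rcases ha with rfl | rfl <;> norm_num
    rw [this, and_iff_right ha]
    constructor <;> intro <;> linarith
  · have hfar : 3 / 2 ≤ |(a : ℝ) - 1 / 2| := by
      have : (a : ℝ) ≤ -1 ∨ 2 ≤ (a : ℝ) := by
        rcases (by omega : a ≤ -1 ∨ 2 ≤ a) with ha' | ha'
        exacts [Or.inl (by exact_mod_cast ha'), Or.inr (by exact_mod_cast ha')]
      rw [le_abs]
      rcases this with ha' | ha'
      exacts [Or.inr (by linarith), Or.inl (by linarith)]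
    simp only [ha, false_and, iff_false, not_le]
    nlinarith [abs_nonneg w]

lemma intPoints_translate_Kh (hm : m ≠ 0) {h : ℕ} (hh : 0 < h) :
    {z : Fin (m + 1) → ℤ | (fun i => (z i : ℝ)) ∈ (fun x => x + tvec (m + 1)) '' Kh (m + 1) h} =
      ↑(snocBox {0, 1} (Finset.Icc (-((h / 2 : ℕ) : ℤ)) (h / 2 : ℕ)) :
        Finset (Fin (m + 1) → ℤ)) := by
  have : Nonempty (Fin m) := ⟨⟨0, Nat.pos_of_ne_zero hm⟩⟩
  ext z
  simp only [mem_ofPred_eq, intCast_mem_translate_Kh_iff hh,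
    mul_abs_sub_half_add_abs_le_iff (Nat.cast_pos.mpr hh), forall_and, forall_const,
    Finset.mem_coe, mem_snocBox, Finset.mem_insert, Finset.mem_singleton, Finset.mem_Icc]
  norm_cast
  have hwh : 2 * |z (Fin.last m)| ≤ h ↔
      -((h / 2 : ℕ) : ℤ) ≤ z (Fin.last m) ∧ z (Fin.last m) ≤ (h / 2 : ℕ) := by
    rcases abs_cases (z (Fin.last m)) with ⟨hw, _⟩ | ⟨hw, _⟩ <;> rw [hw] <;> omega
  rw [← hwh]
  have := abs_nonneg (z (Fin.last m))
  exact ⟨fun ⟨_, hz, hw⟩ => ⟨hz, hw⟩, fun ⟨hz, hw⟩ => ⟨by omega, hz, hw⟩⟩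

lemma latCount_translate_Kh (hm : m ≠ 0) {h : ℕ} (hh : 0 < h) :
    latCount ((fun x => x + tvec (m + 1)) '' Kh (m + 1) h) = 2 ^ m * (2 * (h / 2) + 1) := by
  rw [latCount_eq_ncard_intPoints, intPoints_translate_Kh hm hh, ncard_coe_finset, card_snocBox,
    Int.card_Icc, Finset.card_pair zero_ne_one]
  congr 1
  omega

end Succ

lemma tendsto_two_mul_half_add_one_div :
    Tendsto (fun h : ℕ => (2 * ((h / 2 : ℕ) : ℝ) + 1) / h) atTop (𝓝 1) := by
  have hupper : Tendsto (fun h : ℕ => 1 + 1 / (h : ℝ)) atTop (𝓝 1) := by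
    simpa using tendsto_const_nhds.add (tendsto_const_div_atTop_nhds_zero_nat (1 : ℝ))
  refine tendsto_of_tendsto_of_tendsto_of_le_of_le' tendsto_const_nhds hupper ?_ ?_ <;>
    filter_upwards [eventually_gt_atTop 0] with h hh <;>
    have hhR : (0 : ℝ) < h := Nat.cast_pos.mpr hh
  · rw [le_div_iff₀ hhR, one_mul]
    exact_mod_cast (by omega : h ≤ 2 * (h / 2) + 1)
  · rw [one_add_div hhR.ne', div_le_div_iff_of_pos_right hhR]
    exact_mod_cast (by omega : 2 * (h / 2) + 1 ≤ h + 1)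

lemma tendsto_mul_two_mul_half_add_one_div (a b : ℝ) :
    Tendsto (fun h : ℕ => a * (2 * ((h / 2 : ℕ) : ℝ) + 1) / (b + 2 * h)) atTop (𝓝 (a / 2)) := by
  have hden : Tendsto (fun h : ℕ => b / h + 2) atTop (𝓝 2) := by
    simpa using (tendsto_const_div_atTop_nhds_zero_nat b).add_const 2
  have hlim := (tendsto_two_mul_half_add_one_div.const_mul a).div hden two_ne_zero
  rw [mul_one] at hlim
  refine hlim.congr' ?_
  filter_upwards [eventually_gt_atTop 0] with h hh
  have hhR : (h : ℝ) ≠ 0 := Nat.cast_ne_zero.mpr hh.ne'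
  simp only [Pi.div_apply]
  field_simp

/-- For the double pyramids `K_h` and `t = (1/2, …, 1/2, 0)` one has
`#(K_h + t)/#(K_h) → 2^{n-2}` as `h → ∞`. -/
theorem translated_double_pyramid (n : ℕ) (hn : 2 ≤ n) :
    Filter.Tendsto
      (fun h : ℕ => (latCount ((fun x => x + tvec n) '' Kh n h) : ℝ) / (latCount (Kh n h) : ℝ))
      Filter.atTop (nhds ((2 : ℝ) ^ (n - 2))) := by
  obtain ⟨m, rfl⟩ : ∃ m, n = m + 1 + 1 := ⟨n - 2, by omega⟩
  rw [show m + 1 + 1 - 2 = m by omega, show (2 : ℝ) ^ m = 2 ^ (m + 1) / 2 by ring]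
  refine (tendsto_mul_two_mul_half_add_one_div (2 ^ (m + 1)) (3 ^ (m + 1))).congr' ?_
  filter_upwards [eventually_gt_atTop 0] with h hh
  rw [latCount_translate_Kh m.add_one_ne_zero hh, latCount_Kh hh]
  push_cast
  ring
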